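/- arXiv:1909.03678 — 2 statements merged into one kernel-verified Lean document; each statement's English description precedes it below -/
import Mathlib

section
/- Let ω be an A_1 weight on the unit circle with doubling constant M (i.e., ∫_{2I} ω ≤ M ∫_I ω for all arcs I), let 0 < p < ∞, and let N be a positive integer with M/2^{Np} < 1. Then there is a constant C such that for every arc I ⊆ ∂𝔻 with |I| < 1/2 and every a ∈ 𝔻 with a/|a| the center of I and 1−|a| = |I|, the function f(z) = (1−āz)^{−N} satisfies ‖f‖_{H^p(ω)}^p ≤ C·|I|^{−Np}·∫_I ω(ξ)|dξ|. -/
open MeasureTheory Set Filter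
open scoped ENNReal Real

noncomputable section

/-- The point of the unit circle with angle `θ`. -/
def bpt (θ : ℝ) : ℂ := Complex.exp (θ * Complex.I)

/-- The open unit disk in the complex plane. -/
def unitDisk : Set ℂ := Metric.ball 0 1

/-- Normalized (by `1/(2π)`) integral of an `ℝ≥0∞`-valued function over the unit circle,
parametrized by angle. -/
def circInt (g : ℝ → ℝ≥0∞) : ℝ≥0∞ :=
  (ENNReal.ofReal (2 * π))⁻¹ * ∫⁻ θ in Set.Ioc 0 (2 * π), g θ

/-- `ω(I) = ∫_I ω(ξ)|dξ|` for the arc `I` with initial angle `a` and angular length `ℓ`. -/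
def wInt (ω : ℝ → ℝ) (a ℓ : ℝ) : ℝ≥0∞ :=
  ∫⁻ θ in Set.Ioo a (a + ℓ), ENNReal.ofReal (ω θ)

/-- `ω` is an `A₁` weight on the unit circle: it is `2π`-periodic, nonnegative, measurable, and
`(1/|I|)∫_I ω ≤ C · essinf_I ω` for every arc `I` (here `|I| = ℓ/(2π)` is the normalized length,
and all integrals over arcs are written in the angle variable). -/
def IsA1 (ω : ℝ → ℝ) : Prop :=
  Function.Periodic ω (2 * π) ∧ Measurable ω ∧ (∀ θ, 0 ≤ ω θ) ∧
  ∃ C : ℝ, 0 < C ∧ ∀ a ℓ : ℝ, 0 < ℓ → ℓ ≤ 2 * π →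
    wInt ω a ℓ ≤ ENNReal.ofReal (C * ℓ) *
      essInf (fun θ => ENNReal.ofReal (ω θ)) (volume.restrict (Set.Ioo a (a + ℓ)))

/-- `f` belongs to the classical Hardy space `H¹` of the unit disk. -/
def MemH1 (f : ℂ → ℂ) : Prop :=
  DifferentiableOn ℂ f unitDisk ∧
  ∃ C : ℝ, ∀ r : ℝ, 0 ≤ r → r < 1 →
    circInt (fun θ => ENNReal.ofReal (‖f ((r : ℂ) * bpt θ)‖)) ≤ ENNReal.ofReal C

/-- `fb` is the (a.e. defined) boundary-value function of `f` (radial limits a.e.). -/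
def HasBoundary (f : ℂ → ℂ) (fb : ℝ → ℂ) : Prop :=
  Measurable fb ∧
  ∀ᵐ θ : ℝ, Filter.Tendsto (fun r : ℝ => f ((r : ℂ) * bpt θ))
    (nhdsWithin 1 (Set.Iio 1)) (nhds (fb θ))

/-- The `p`-th power of the norm of a boundary function `fb` in `L^p(ω)`:
`(1/2π)∫_{∂𝔻} |fb|^p ω`. -/
def lpNormP (p : ℝ) (ω : ℝ → ℝ) (fb : ℝ → ℂ) : ℝ≥0∞ :=
  circInt fun θ => ENNReal.ofReal (‖fb θ‖ ^ p * ω θ)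

/-- The norm of a boundary function `fb` in `L^p(ω)` (equivalently, the `H^p(ω)` norm). -/
def wLpNorm (p : ℝ) (ω : ℝ → ℝ) (fb : ℝ → ℂ) : ℝ≥0∞ := lpNormP p ω fb ^ (1 / p)

/-- `f`, with boundary values `fb`, belongs to the weighted Hardy space `H^p(ω)`. -/
def MemHp (p : ℝ) (ω : ℝ → ℝ) (f : ℂ → ℂ) (fb : ℝ → ℂ) : Prop :=
  MemH1 f ∧ HasBoundary f fb ∧ lpNormP p ω fb < ⊤

/-- The norm of `f` in `L^q(dμ)` over the unit disk. -/
def lqMuNorm (q : ℝ) (μ : Measure ℂ) (f : ℂ → ℂ) : ℝ≥0∞ :=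
  (∫⁻ z in unitDisk, ENNReal.ofReal (‖f z‖) ^ q ∂μ) ^ (1 / q)

/-- The Carleson square over the arc with initial angle `a` and angular length `ℓ`
(whose normalized length is `|I| = ℓ/(2π)`). -/
def carleson (a ℓ : ℝ) : Set ℂ :=
  {z | z ∈ unitDisk ∧ 1 - ℓ / (2 * π) ≤ ‖z‖ ∧
    ∃ θ ∈ Set.Ioo a (a + ℓ), z = (‖z‖ : ℂ) * bpt θ}

/-- The nontangential approach region `Γ(ξ) = {z ∈ 𝔻 : |ξ - z| < 2(1-|z|)}`. -/
def stolz (ξ : ℂ) : Set ℂ := {z ∈ unitDisk | ‖ξ - z‖ < 2 * (1 - ‖z‖)}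

/-- The set `T(z) = {ξ ∈ ∂𝔻 : z ∈ Γ(ξ)}`, as a subset of the circle in `ℂ`. -/
def Tset (z : ℂ) : Set ℂ := {ξ | ‖ξ‖ = 1 ∧ z ∈ stolz ξ}

/-- `ν(T(z))` for a Borel measure `ν` on the unit circle. -/
def Tmeas (ν : Measure ℂ) (z : ℂ) : ℝ≥0∞ := ν (Tset z)

/-- `ω(T(z)) = ∫_{T(z)} ω(ξ)|dξ|`, in the angle variable. -/
def TmeasW (ω : ℝ → ℝ) (z : ℂ) : ℝ≥0∞ :=
  ∫⁻ θ in {θ : ℝ | θ ∈ Set.Ioc 0 (2 * π) ∧ z ∈ stolz (bpt θ)}, ENNReal.ofReal (ω θ)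

/-- The generalized area operator `A_{μ,ν} f(ξ) = ∫_{Γ(ξ)} |f(z)| dμ(z)/ν(T(z))`. -/
def areaOp (μ : Measure ℂ) (ν : Measure ℂ) (f : ℂ → ℂ) (θ : ℝ) : ℝ≥0∞ :=
  ∫⁻ z in stolz (bpt θ), ENNReal.ofReal (‖f z‖) / Tmeas ν z ∂μ

/-- The measure `dμ_ν^ω(z) = (ω(T(z))/ν(T(z))) dμ(z)`. -/
def muNuOmega (μ : Measure ℂ) (ν : Measure ℂ) (ω : ℝ → ℝ) : Measure ℂ :=
  μ.withDensity fun z => TmeasW ω z / Tmeas ν z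

/-- The arc `I_z` (of angular width `1-|z|`, centered at `z/|z|`) is contained, modulo `2π`,
in the arc with initial angle `a` and angular length `ℓ`. -/
def IzSub (z : ℂ) (a ℓ : ℝ) : Prop :=
  ∃ k : ℤ, a ≤ Complex.arg z - (1 - ‖z‖) / 2 + 2 * π * k ∧
    Complex.arg z + (1 - ‖z‖) / 2 + 2 * π * k ≤ a + ℓ

/-- The weighted maximal function `M_ω g(z) = sup_{I ⊇ I_z} (1/ω(I))∫_I |g| ω`. -/
def maxFn (ω : ℝ → ℝ) (g : ℝ → ℂ) (z : ℂ) : ℝ≥0∞ :=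
  ⨆ (a : ℝ) (ℓ : ℝ) (_ : 0 < ℓ ∧ ℓ ≤ 2 * π ∧ IzSub z a ℓ),
    (∫⁻ θ in Set.Ioo a (a + ℓ), ENNReal.ofReal (‖g θ‖ * ω θ)) / wInt ω a ℓ

/-- `M_{ω,α}(μ)(z) = sup_{I ⊇ I_z} μ(S(I))/ω(I)^α`. -/
def maxCarl (ω : ℝ → ℝ) (α : ℝ) (μ : Measure ℂ) (z : ℂ) : ℝ≥0∞ :=
  ⨆ (a : ℝ) (ℓ : ℝ) (_ : 0 < ℓ ∧ ℓ ≤ 2 * π ∧ IzSub z a ℓ),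
    μ (carleson a ℓ) / wInt ω a ℓ ^ α

/-- `μ̃_ω(ξ) = (1/(2πω(ξ))) ∫_𝔻 (1-|z|²)/|ξ-z|² dμ(z)`. -/
def tildeMu (μ : Measure ℂ) (ω : ℝ → ℝ) (θ : ℝ) : ℝ≥0∞ :=
  (ENNReal.ofReal (2 * π * ω θ))⁻¹ *
    ∫⁻ z in unitDisk, ENNReal.ofReal ((1 - ‖z‖ ^ 2) / ‖bpt θ - z‖ ^ 2) ∂μ

/-- `μ̂_ω(ξ) = (1/ω(ξ)) ∫_{Γ(ξ)} dμ(z)/(1-|z|)`. -/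
def hatMu (μ : Measure ℂ) (ω : ℝ → ℝ) (θ : ℝ) : ℝ≥0∞ :=
  (ENNReal.ofReal (ω θ))⁻¹ *
    ∫⁻ z in stolz (bpt θ), ENNReal.ofReal ((1 - ‖z‖)⁻¹) ∂μ

/-!
Put `δ = |I|`, let `c` be the center of `I` and `h = πδ` its angular half-width. On the ring
`2^(k-1) h ≤ |θ - c| < 2^k h` one has `|1 - (1 - δ) e^{i(θ - c)}| ≥ 2^(k-1) δ` (for `k = 0` simply
`≥ δ`), so `|f|^p ≤ 2^{Np} δ^{-Np} 2^{-kNp}` there, while `k` doublings of `I` show that the ring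
carries `ω`-mass at most `M^k ω(I)`. Summing over `k` gives a geometric series of ratio
`M / 2^{Np} < 1`.
-/

theorem Function.Periodic.setLIntegral_Ioc_add_eq {F : ℝ → ℝ≥0∞} {T : ℝ}
    (hF : Function.Periodic F T) (hT : 0 < T) (c : ℝ) :
    ∫⁻ x in Ioc c (c + T), F x = ∫⁻ x in Ioc 0 T, F x := by
  have := (isAddFundamentalDomain_Ioc hT c).setLIntegral_eq (isAddFundamentalDomain_Ioc hT 0) F
    fun ⟨_, n, rfl⟩ x => by simpa [add_comm] using hF.zsmul n x
  rwa [zero_add] at this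

theorem ENNReal.inv_one_sub_ofReal {q : ℝ} (hq : q < 1) :
    (1 - ENNReal.ofReal q)⁻¹ = ENNReal.ofReal (1 - max q 0)⁻¹ := by
  have hq' : max q 0 < 1 := max_lt hq one_pos
  rw [ENNReal.ofReal_inv_of_pos (by linarith), ENNReal.ofReal_sub _ (le_max_right q 0),
    ENNReal.ofReal_one, ENNReal.ofReal_max, ENNReal.ofReal_zero, max_eq_left zero_le]

theorem bpt_periodic : Function.Periodic bpt (2 * π) := fun θ => by
  simp only [bpt, Complex.ofReal_add, add_mul, Complex.exp_add, Complex.ofReal_mul,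
    Complex.ofReal_ofNat, Complex.exp_two_pi_mul_I, mul_one]

theorem norm_one_sub_conj_mul_bpt (r c θ : ℝ) :
    ‖1 - (starRingEnd ℂ) ((r : ℂ) * bpt c) * bpt θ‖ = ‖1 - (r : ℂ) * bpt (θ - c)‖ := by
  congr 2
  simp only [bpt, map_mul, Complex.conj_ofReal, ← Complex.exp_conj, Complex.conj_I, mul_neg,
    mul_assoc, ← Complex.exp_add, Complex.ofReal_sub, sub_mul]
  ring_nf

theorem norm_one_sub_mul_bpt_sq (r t : ℝ) :
    ‖1 - (r : ℂ) * bpt t‖ ^ 2 = (1 - r) ^ 2 + 2 * r * (1 - Real.cos t) := by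
  rw [Complex.sq_norm, Complex.normSq_apply]
  simp only [bpt, Complex.sub_re, Complex.sub_im, Complex.one_re, Complex.one_im,
    Complex.re_ofReal_mul, Complex.im_ofReal_mul, Complex.exp_ofReal_mul_I_re,
    Complex.exp_ofReal_mul_I_im]
  linear_combination r ^ 2 * Real.sin_sq_add_cos_sq t

theorem one_sub_le_norm_one_sub_mul_bpt {r : ℝ} (hr : 0 ≤ r) (t : ℝ) :
    1 - r ≤ ‖1 - (r : ℂ) * bpt t‖ := by
  simpa [bpt, abs_of_nonneg hr, Complex.norm_exp_ofReal_mul_I] using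
    norm_sub_norm_le (1 : ℂ) ((r : ℂ) * bpt t)

/-- Jordan-type lower bound, from `cos t ≤ 1 - 2 t² / π²` on `[-π, π]`. -/
theorem abs_div_pi_le_norm_one_sub_mul_bpt {r t : ℝ} (hr : 1 / 2 ≤ r) (ht : |t| ≤ π) :
    |t| / π ≤ ‖1 - (r : ℂ) * bpt t‖ := by
  have hcos := Real.cos_le_one_sub_mul_cos_sq ht
  have hsq : (|t| / π) ^ 2 ≤ ‖1 - (r : ℂ) * bpt t‖ ^ 2 := by
    rw [norm_one_sub_mul_bpt_sq, div_pow, sq_abs]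
    have : t ^ 2 / π ^ 2 ≤ 1 - Real.cos t := by
      rw [div_le_iff₀ (by positivity)]
      nlinarith [Real.pi_pos, show 2 / π ^ 2 * t ^ 2 * π ^ 2 = 2 * t ^ 2 by field_simp]
    have hr' : 0 ≤ 2 * r - 1 := by linarith
    have hcos' : 0 ≤ 1 - Real.cos t := by linarith [Real.cos_le_one t]
    nlinarith [sq_nonneg (1 - r), mul_nonneg hr' hcos']
  exact (pow_le_pow_iff_left₀ (by positivity) (norm_nonneg _) two_ne_zero).1 hsq

theorem norm_inv_pow_rpow (x : ℂ) (N : ℕ) (p : ℝ) :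
    ‖x⁻¹ ^ N‖ ^ p = ‖x‖ ^ (-((N : ℝ) * p)) := by
  rw [norm_pow, norm_inv, inv_pow, Real.inv_rpow (by positivity), Real.rpow_neg (norm_nonneg _),
    Real.rpow_mul (norm_nonneg _), Real.rpow_natCast]

def dyadicRing (c h : ℝ) : ℕ → Set ℝ
  | 0 => {θ | |θ - c| < h}
  | k + 1 => {θ | 2 ^ k * h ≤ |θ - c| ∧ |θ - c| < 2 ^ (k + 1) * h}

theorem abs_sub_lt_of_mem_dyadicRing {c h θ : ℝ} {k : ℕ} (hθ : θ ∈ dyadicRing c h k) :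
    |θ - c| < 2 ^ k * h := by
  cases k with
  | zero => simpa [dyadicRing] using hθ
  | succ k => exact hθ.2

theorem iUnion_dyadicRing (c : ℝ) {h : ℝ} (hh : 0 < h) : ⋃ k, dyadicRing c h k = univ := by
  refine eq_univ_of_forall fun θ => mem_iUnion.2 ?_
  rcases lt_or_ge |θ - c| h with hlt | hge
  · exact ⟨0, hlt⟩
  · obtain ⟨n, hn, hn'⟩ := exists_nat_pow_near ((one_le_div hh).2 hge) one_lt_two
    rw [le_div_iff₀ hh] at hn
    rw [div_lt_iff₀ hh] at hn'
    exact ⟨n + 1, hn, hn'⟩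

theorem norm_one_sub_mul_bpt_ge_of_mem_dyadicRing {δ c θ : ℝ} {k : ℕ} (hδ : 0 < δ)
    (hδ2 : δ ≤ 1 / 2) (hθ : θ ∈ dyadicRing c (π * δ) k) (hθπ : |θ - c| ≤ π) :
    2 ^ k * δ / 2 ≤ ‖1 - ((1 - δ : ℝ) : ℂ) * bpt (θ - c)‖ := by
  cases k with
  | zero => linarith [one_sub_le_norm_one_sub_mul_bpt (r := 1 - δ) (by linarith) (θ - c)]
  | succ k =>
    calc 2 ^ (k + 1) * δ / 2 = 2 ^ k * (π * δ) / π := by field_simp; ring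
      _ ≤ |θ - c| / π := by gcongr; exact hθ.1
      _ ≤ _ := abs_div_pi_le_norm_one_sub_mul_bpt (by linarith) hθπ

theorem norm_test_function_rpow_le_of_mem_dyadicRing {δ c θ p : ℝ} {N k : ℕ} (hδ : 0 < δ)
    (hδ2 : δ ≤ 1 / 2) (hp : 0 ≤ p) (hθ : θ ∈ dyadicRing c (π * δ) k) (hθπ : |θ - c| ≤ π) :
    ‖(1 - (starRingEnd ℂ) (((1 - δ : ℝ) : ℂ) * bpt c) * bpt θ)⁻¹ ^ N‖ ^ p ≤
      2 ^ ((N : ℝ) * p) * δ ^ (-((N : ℝ) * p)) * (2 ^ (-((N : ℝ) * p))) ^ k := by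
  rw [norm_inv_pow_rpow, norm_one_sub_conj_mul_bpt]
  set e := (N : ℝ) * p
  calc ‖1 - ((1 - δ : ℝ) : ℂ) * bpt (θ - c)‖ ^ (-e) ≤ (2 ^ k * δ / 2) ^ (-e) :=
        Real.rpow_le_rpow_of_nonpos (by positivity)
          (norm_one_sub_mul_bpt_ge_of_mem_dyadicRing hδ hδ2 hθ hθπ) (neg_nonpos.2 (by positivity))
    _ = 2 ^ e * δ ^ (-e) * (2 ^ (-e)) ^ k := by
        rw [div_eq_mul_inv, Real.mul_rpow (by positivity) (by norm_num),
          Real.mul_rpow (by positivity) hδ.le, ← Real.rpow_natCast, ← Real.rpow_mul zero_le_two,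
          ← Real.rpow_natCast, ← Real.rpow_mul zero_le_two, Real.inv_rpow zero_le_two,
          ← Real.rpow_neg zero_le_two, neg_neg, mul_comm (k : ℝ)]
        ring

def DoublingWith (ω : ℝ → ℝ) (M : ℝ) : Prop :=
  ∀ a ℓ : ℝ, 0 < ℓ → 2 * ℓ ≤ 2 * π → wInt ω (a - ℓ / 2) (2 * ℓ) ≤ ENNReal.ofReal M * wInt ω a ℓ

section Doubling

variable {ω : ℝ → ℝ} {M : ℝ}

theorem DoublingWith.wInt_le_pow_mul (hM : DoublingWith ω M) {c h s : ℝ} (k : ℕ) (hs : 0 < s)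
    (hsk : s ≤ 2 ^ k * h) (hsπ : s ≤ π) :
    wInt ω (c - s) (2 * s) ≤ ENNReal.ofReal M ^ k * wInt ω (c - h) (2 * h) := by
  induction k generalizing s with
  | zero =>
    rw [pow_zero, one_mul]
    exact lintegral_mono_set (Ioo_subset_Ioo (by linarith) (by linarith))
  | succ k ih =>
    have hhalf := ih (s := s / 2) (by positivity) (by rw [pow_succ] at hsk; linarith) (by linarith)
    rw [show 2 * (s / 2) = s by ring] at hhalf
    calc wInt ω (c - s) (2 * s) ≤ ENNReal.ofReal M * wInt ω (c - s / 2) s := by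
          simpa only [show c - s / 2 - s / 2 = c - s by ring] using
            hM (c - s / 2) s hs (by linarith)
      _ ≤ ENNReal.ofReal M * (ENNReal.ofReal M ^ k * wInt ω (c - h) (2 * h)) := by gcongr
      _ = ENNReal.ofReal M ^ (k + 1) * wInt ω (c - h) (2 * h) := by ring

theorem DoublingWith.setLIntegral_inter_dyadicRing_le (hM : DoublingWith ω M) {c h : ℝ}
    (hh : 0 < h) (k : ℕ) :
    ∫⁻ θ in Ioo (c - π) (c + π) ∩ dyadicRing c h k, ENNReal.ofReal (ω θ) ≤
      ENNReal.ofReal M ^ k * wInt ω (c - h) (2 * h) := by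
  set s := min (2 ^ k * h) π
  refine le_trans (lintegral_mono_set fun θ hθ => ?_) (hM.wInt_le_pow_mul k
    (lt_min (by positivity) Real.pi_pos) (min_le_left _ _) (min_le_right _ _))
  have hθs : |θ - c| < s := lt_min (abs_sub_lt_of_mem_dyadicRing hθ.2)
    (abs_sub_lt_iff.2 ⟨by linarith [hθ.1.2], by linarith [hθ.1.1]⟩)
  rw [abs_sub_lt_iff] at hθs
  constructor <;> linarith

theorem DoublingWith.setLIntegral_le_of_dyadicRing_bound (hM : DoublingWith ω M)
    (hω : Measurable ω) {c h : ℝ} (hh : 0 < h) {g : ℝ → ℝ≥0∞} {b q : ℝ≥0∞} (hb : b ≠ ⊤) (hq : q ≠ ⊤)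
    (hg : ∀ k, ∀ θ ∈ Ioo (c - π) (c + π) ∩ dyadicRing c h k,
      g θ ≤ b * q ^ k * ENNReal.ofReal (ω θ)) :
    ∫⁻ θ in Ioo (c - π) (c + π), g θ ≤
      b * (1 - ENNReal.ofReal M * q)⁻¹ * wInt ω (c - h) (2 * h) := by
  have hring : ∀ k, ∫⁻ θ in Ioo (c - π) (c + π) ∩ dyadicRing c h k, g θ ≤
      b * wInt ω (c - h) (2 * h) * (ENNReal.ofReal M * q) ^ k := fun k => calc
    _ ≤ ∫⁻ θ in Ioo (c - π) (c + π) ∩ dyadicRing c h k, b * q ^ k * ENNReal.ofReal (ω θ) :=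
        setLIntegral_mono (by fun_prop) (hg k)
    _ = b * q ^ k * ∫⁻ θ in Ioo (c - π) (c + π) ∩ dyadicRing c h k, ENNReal.ofReal (ω θ) :=
        lintegral_const_mul' _ _ (by finiteness)
    _ ≤ b * q ^ k * (ENNReal.ofReal M ^ k * wInt ω (c - h) (2 * h)) := by
        gcongr; exact hM.setLIntegral_inter_dyadicRing_le hh k
    _ = _ := by ring
  calc ∫⁻ θ in Ioo (c - π) (c + π), g θ
      = ∫⁻ θ in ⋃ k, Ioo (c - π) (c + π) ∩ dyadicRing c h k, g θ := by
        rw [← inter_iUnion, iUnion_dyadicRing c hh, inter_univ]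
    _ ≤ ∑' k, ∫⁻ θ in Ioo (c - π) (c + π) ∩ dyadicRing c h k, g θ := lintegral_iUnion_le _ _
    _ ≤ ∑' k, b * wInt ω (c - h) (2 * h) * (ENNReal.ofReal M * q) ^ k :=
        ENNReal.tsum_le_tsum hring
    _ = b * (1 - ENNReal.ofReal M * q)⁻¹ * wInt ω (c - h) (2 * h) := by
        rw [ENNReal.tsum_mul_left, ENNReal.tsum_geometric]; ring

end Doubling

theorem lintegral_test_function_le {ω : ℝ → ℝ} {M p δ c : ℝ} {N : ℕ}
    (hper : Function.Periodic ω (2 * π)) (hmeas : Measurable ω) (hM : DoublingWith ω M)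
    (hp : 0 ≤ p) (hδ : 0 < δ) (hδ2 : δ ≤ 1 / 2) :
    ∫⁻ θ in Ioc 0 (2 * π), ENNReal.ofReal
        (‖(1 - (starRingEnd ℂ) (((1 - δ : ℝ) : ℂ) * bpt c) * bpt θ)⁻¹ ^ N‖ ^ p * ω θ) ≤
      ENNReal.ofReal (2 ^ ((N : ℝ) * p) * δ ^ (-((N : ℝ) * p))) *
        (1 - ENNReal.ofReal M * ENNReal.ofReal (2 ^ (-((N : ℝ) * p))))⁻¹ *
          wInt ω (c - π * δ) (2 * (π * δ)) := by
  set G : ℝ → ℝ≥0∞ := fun θ => ENNReal.ofReal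
    (‖(1 - (starRingEnd ℂ) (((1 - δ : ℝ) : ℂ) * bpt c) * bpt θ)⁻¹ ^ N‖ ^ p * ω θ)
  have hG : Function.Periodic G (2 * π) := fun θ => by simp only [G, bpt_periodic θ, hper θ]
  rw [← hG.setLIntegral_Ioc_add_eq Real.two_pi_pos (c - π), show c - π + 2 * π = c + π by ring,
    ← setLIntegral_congr Ioo_ae_eq_Ioc]
  refine hM.setLIntegral_le_of_dyadicRing_bound hmeas (by positivity) ENNReal.ofReal_ne_top
    ENNReal.ofReal_ne_top fun k θ hθ => ?_
  rw [← ENNReal.ofReal_pow (by positivity), ← ENNReal.ofReal_mul (by positivity)]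
  refine (ENNReal.ofReal_mul (by positivity)).trans_le ?_
  gcongr
  exact norm_test_function_rpow_le_of_mem_dyadicRing hδ hδ2 hp hθ.2
    (abs_sub_lt_iff.2 ⟨by linarith [hθ.1.2], by linarith [hθ.1.1]⟩).le

theorem test_function_norm_estimate_general
    (ω : ℝ → ℝ) (M p : ℝ) (N : ℕ) (hω : IsA1 ω) (hp : 0 < p)
    (hM : ∀ a ℓ : ℝ, 0 < ℓ → 2 * ℓ ≤ 2 * π →
      wInt ω (a - ℓ / 2) (2 * ℓ) ≤ ENNReal.ofReal M * wInt ω a ℓ)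
    (hMN : M / 2 ^ ((N : ℝ) * p) < 1) :
    ∃ C : ℝ, 0 < C ∧ ∀ a ℓ : ℝ, 0 < ℓ → ℓ / (2 * π) < 1 / 2 →
      lpNormP p ω
          (fun θ => ((1 : ℂ) -
            (starRingEnd ℂ) (((1 - ℓ / (2 * π) : ℝ) : ℂ) * bpt (a + ℓ / 2)) * bpt θ)⁻¹ ^ N) ≤
        ENNReal.ofReal (C * (ℓ / (2 * π)) ^ (-((N : ℝ) * p))) * wInt ω a ℓ := by
  obtain ⟨hper, hmeas, -, -⟩ := hω
  have hq : 0 < 1 - max (M / 2 ^ ((N : ℝ) * p)) 0 := sub_pos.2 (max_lt hMN one_pos)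
  refine ⟨2 ^ ((N : ℝ) * p) * (1 - max (M / 2 ^ ((N : ℝ) * p)) 0)⁻¹, by positivity,
    fun a ℓ hℓ hδ2 => ?_⟩
  have hI : wInt ω (a + ℓ / 2 - π * (ℓ / (2 * π))) (2 * (π * (ℓ / (2 * π)))) = wInt ω a ℓ := by
    congr 1 <;> field_simp; ring
  have h2π : (ENNReal.ofReal (2 * π))⁻¹ ≤ 1 :=
    ENNReal.inv_le_one.2 (ENNReal.one_le_ofReal.2 (by linarith [Real.pi_gt_three]))
  refine (mul_le_of_le_one_left' h2π).trans <|
    (lintegral_test_function_le hper hmeas hM hp.le (by positivity) hδ2.le).trans_eq ?_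
  rw [hI, ← ENNReal.ofReal_mul' (by positivity), Real.rpow_neg zero_le_two, ← div_eq_mul_inv M,
    ENNReal.inv_one_sub_ofReal hMN, ← ENNReal.ofReal_mul (by positivity)]
  ring_nf

/-- Estimate (2.7): with `ω ∈ A₁` of doubling constant `M`, `0 < p < ∞` and `N` a positive
integer with `M/2^{Np} < 1`, the test function `f(z) = (1 - conj(a)·z)^{-N}`, where
`a/|a|` is the center of the arc `I` and `1-|a| = |I|`, satisfies
`‖f‖_{H^p(ω)}^p ≤ C·|I|^{-Np}·∫_I ω`. -/
theorem test_function_norm_estimate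
    (ω : ℝ → ℝ) (M p : ℝ) (N : ℕ) (hω : IsA1 ω) (hp : 0 < p) (hN : 0 < N)
    (hM : ∀ a ℓ : ℝ, 0 < ℓ → 2 * ℓ ≤ 2 * π →
      wInt ω (a - ℓ / 2) (2 * ℓ) ≤ ENNReal.ofReal M * wInt ω a ℓ)
    (hMN : M / 2 ^ ((N : ℝ) * p) < 1) :
    ∃ C : ℝ, 0 < C ∧ ∀ a ℓ : ℝ, 0 < ℓ → ℓ / (2 * π) < 1 / 2 →
      lpNormP p ω
          (fun θ => ((1 : ℂ) -
            (starRingEnd ℂ) (((1 - ℓ / (2 * π) : ℝ) : ℂ) * bpt (a + ℓ / 2)) * bpt θ)⁻¹ ^ N) ≤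
        ENNReal.ofReal (C * (ℓ / (2 * π)) ^ (-((N : ℝ) * p))) * wInt ω a ℓ :=
  test_function_norm_estimate_general ω M p N hω hp hM hMN

end
end

section
/- Let ω be an A_1 weight on the unit circle, let 0 < q < 1 and β ≥ 0. For each arc I ⊆ ∂𝔻 let 𝒟(I) denote the family of dyadic subarcs of I, and suppose nonnegative numbers a_Q are assigned to dyadic arcs Q so that the functions F_I(ξ) := (ω(I))^{−β} Σ_{Q ∈ 𝒟(I)} a_Q χ_Q(ξ) satisfy (1/ω(I))∫_I (F_I(ξ))^q ω(ξ)|dξ| ≤ 1 for every arc I. Then there exist constants C, λ > 0 such that for every arc I and every t > 0, ω({ξ ∈ I : (F_I(ξ))^q > t}) ≤ C·e^{−λt}·ω(I). -/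
open MeasureTheory Set Filter
open scoped ENNReal Real

noncomputable section

/-- `F_I(ξ) = ω(I)^{-β} Σ_{Q ∈ 𝒟(I)} a_Q χ_Q(ξ)`, where `𝒟(I)` is the family of dyadic subarcs
of the arc `I` with initial angle `b` and length `ℓ` (the `n`-th generation consisting of the
`2^n` arcs `[b + jℓ/2^n, b + (j+1)ℓ/2^n)`), and where `a` assigns to each arc (given by its
initial angle and its length) a nonnegative coefficient. -/
def dyadF (a : ℝ → ℝ → ℝ) (ω : ℝ → ℝ) (β b ℓ : ℝ) (θ : ℝ) : ℝ≥0∞ :=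
  wInt ω b ℓ ^ (-β) *
    ∑' n : ℕ, ∑ j ∈ Finset.range (2 ^ n),
      Set.indicator
        (Set.Ico (b + (j : ℝ) * (ℓ / 2 ^ n)) (b + ((j : ℝ) + 1) * (ℓ / 2 ^ n)))
        (fun _ => ENNReal.ofReal (a (b + (j : ℝ) * (ℓ / 2 ^ n)) (ℓ / 2 ^ n))) θ

/-!
Write `F_I^q = u · S_I^q` with `u = ω(I)^(-β q)` and `S_I` the sum of the coefficients of the
dyadic subarcs of `I` containing the point. Since `ω(J) ≤ ω(I)` for a subarc `J` and `β ≥ 0`, the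
hypothesis yields `∫_J u S_J^q dω ≤ ω(J)` for every subarc `J` of `I`. A stopping-time argument
(stop at the maximal dyadic arcs where `u (sum of the coefficients down to them)^q` exceeds `t`),
using subadditivity of `x ↦ x^q` for `q ≤ 1` and Chebyshev's inequality on each stopping arc,
gives `ω{u S_I^q > t + 2} ≤ ω{u S_I^q > t} / 2`. Iterating, `ω{u S_I^q > 2n} ≤ 2^(-n) ω(I)`.
-/

def dyadicLayer (a : ℝ → ℝ → ℝ) (b ℓ : ℝ) (n : ℕ) (θ : ℝ) : ℝ≥0∞ :=
  ∑ j ∈ Finset.range (2 ^ n),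
    Set.indicator
      (Set.Ico (b + (j : ℝ) * (ℓ / 2 ^ n)) (b + ((j : ℝ) + 1) * (ℓ / 2 ^ n)))
      (fun _ => ENNReal.ofReal (a (b + (j : ℝ) * (ℓ / 2 ^ n)) (ℓ / 2 ^ n))) θ

def dyadicSum (a : ℝ → ℝ → ℝ) (b ℓ θ : ℝ) : ℝ≥0∞ := ∑' n, dyadicLayer a b ℓ n θ

theorem dyadF_eq_mul_dyadicSum (a : ℝ → ℝ → ℝ) (ω : ℝ → ℝ) (β b ℓ θ : ℝ) :
    dyadF a ω β b ℓ θ = wInt ω b ℓ ^ (-β) * dyadicSum a b ℓ θ := rfl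

section DyadicLayer

variable {a : ℝ → ℝ → ℝ} {b ℓ θ : ℝ} {n : ℕ}

theorem dyadicLayer_zero :
    dyadicLayer a b ℓ 0 = (Ico b (b + ℓ)).indicator fun _ => ENNReal.ofReal (a b ℓ) := by
  ext θ
  simp [dyadicLayer]

theorem dyadicLayer_succ :
    dyadicLayer a b ℓ (n + 1) θ =
      dyadicLayer a b (ℓ / 2) n θ + dyadicLayer a (b + ℓ / 2) (ℓ / 2) n θ := by
  rw [dyadicLayer, pow_succ, mul_two, Finset.sum_range_add]
  have hlen : ℓ / 2 ^ (n + 1) = ℓ / 2 / 2 ^ n := by ring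
  have hshift : ∀ x : ℝ,
      b + ((2 ^ n : ℕ) + x) * (ℓ / 2 / 2 ^ n) = b + ℓ / 2 + x * (ℓ / 2 / 2 ^ n) := by
    intro x; push_cast; field_simp; ring
  congr 1
  · simp only [dyadicLayer, hlen]
  · simp only [dyadicLayer, hlen, Nat.cast_add, hshift, add_assoc]

theorem dyadicLayer_eq_zero_of_notMem (hℓ : 0 ≤ ℓ) (hθ : θ ∉ Ico b (b + ℓ)) :
    dyadicLayer a b ℓ n θ = 0 := by
  induction n generalizing b ℓ with
  | zero => simp [dyadicLayer_zero, hθ]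
  | succ n ih =>
    rw [dyadicLayer_succ, ih (by positivity), ih (by positivity), add_zero]
    · exact fun h => hθ ⟨by linarith [h.1], by linarith [h.2]⟩
    · exact fun h => hθ ⟨h.1, by linarith [h.2]⟩

theorem dyadicLayer_succ_of_mem_half {c : ℝ} (hℓ : 0 ≤ ℓ) (hc : c = b ∨ c = b + ℓ / 2)
    (hθ : θ ∈ Ico c (c + ℓ / 2)) :
    dyadicLayer a b ℓ (n + 1) θ = dyadicLayer a c (ℓ / 2) n θ := by
  have hℓ2 : 0 ≤ ℓ / 2 := by positivity
  rw [dyadicLayer_succ]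
  rcases hc with rfl | rfl
  · rw [dyadicLayer_eq_zero_of_notMem hℓ2 fun h => (h.1.trans_lt hθ.2).false, add_zero]
  · rw [dyadicLayer_eq_zero_of_notMem hℓ2 fun h => (hθ.1.trans_lt h.2).false, zero_add]

@[fun_prop]
theorem measurable_dyadicLayer : Measurable (dyadicLayer a b ℓ n) :=
  Finset.measurable_sum _ fun _ _ => measurable_const.indicator measurableSet_Ico

end DyadicLayer

theorem Ico_half_subset {b ℓ c : ℝ} (hℓ : 0 ≤ ℓ) (hc : c = b ∨ c = b + ℓ / 2) :
    Ico c (c + ℓ / 2) ⊆ Ico b (b + ℓ) := by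
  rcases hc with rfl | rfl <;> exact Ico_subset_Ico (by linarith) (by linarith)

section DyadicSum

variable {a : ℝ → ℝ → ℝ} {b ℓ θ : ℝ}

@[fun_prop]
theorem measurable_dyadicSum : Measurable (dyadicSum a b ℓ) :=
  Measurable.tsum fun _ => measurable_dyadicLayer

theorem ofReal_le_dyadicSum (hθ : θ ∈ Ico b (b + ℓ)) :
    ENNReal.ofReal (a b ℓ) ≤ dyadicSum a b ℓ θ := by
  simpa [dyadicSum, dyadicLayer_zero, hθ] using
    ENNReal.le_tsum (f := fun n => dyadicLayer a b ℓ n θ) 0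

theorem sum_range_dyadicLayer_le_dyadicSum (k : ℕ) :
    ∑ n ∈ Finset.range k, dyadicLayer a b ℓ n θ ≤ dyadicSum a b ℓ θ :=
  ENNReal.sum_le_tsum _

theorem sum_range_succ_dyadicLayer_of_mem_half {c : ℝ} (hℓ : 0 ≤ ℓ) (hc : c = b ∨ c = b + ℓ / 2)
    (hθ : θ ∈ Ico c (c + ℓ / 2)) (k : ℕ) :
    ∑ n ∈ Finset.range (k + 1), dyadicLayer a b ℓ n θ =
      ENNReal.ofReal (a b ℓ) + ∑ n ∈ Finset.range k, dyadicLayer a c (ℓ / 2) n θ := by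
  rw [Finset.sum_range_succ', add_comm, dyadicLayer_zero,
    indicator_of_mem (Ico_half_subset hℓ hc hθ)]
  simp only [dyadicLayer_succ_of_mem_half hℓ hc hθ]

theorem dyadicSum_eq_of_mem_half {c : ℝ} (hℓ : 0 ≤ ℓ) (hc : c = b ∨ c = b + ℓ / 2)
    (hθ : θ ∈ Ico c (c + ℓ / 2)) :
    dyadicSum a b ℓ θ = ENNReal.ofReal (a b ℓ) + dyadicSum a c (ℓ / 2) θ := by
  rw [dyadicSum, tsum_eq_zero_add' ENNReal.summable, dyadicLayer_zero,
    indicator_of_mem (Ico_half_subset hℓ hc hθ)]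
  simp only [dyadicLayer_succ_of_mem_half hℓ hc hθ, dyadicSum]

end DyadicSum

theorem measure_inter_setOf_two_lt_le_half {α : Type*} [MeasurableSpace α] {μ : Measure α}
    {s : Set α} {f : α → ℝ≥0∞} (hf : AEMeasurable f (μ.restrict s))
    (h : ∫⁻ x in s, f x ∂μ ≤ μ s) : μ (s ∩ {x | 2 < f x}) ≤ 2⁻¹ * μ s := by
  calc μ (s ∩ {x | 2 < f x}) ≤ μ.restrict s {x | 2 ≤ f x} := by
        rw [inter_comm]
        exact (measure_mono (inter_subset_inter_left s fun x (hx : 2 < f x) => hx.le)).trans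
          (Measure.le_restrict_apply _ _)
    _ ≤ (∫⁻ x in s, f x ∂μ) / 2 := meas_ge_le_lintegral_div hf (by norm_num) (by norm_num)
    _ ≤ 2⁻¹ * μ s := by rw [ENNReal.div_eq_inv_mul]; gcongr

theorem measure_Ico_inter_eq_add_halves {ν : Measure ℝ} {b ℓ : ℝ} {s : Set ℝ} (hℓ : 0 ≤ ℓ)
    (hs : MeasurableSet s) :
    ν (Ico b (b + ℓ) ∩ s) =
      ν (Ico b (b + ℓ / 2) ∩ s) + ν (Ico (b + ℓ / 2) (b + ℓ / 2 + ℓ / 2) ∩ s) := by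
  have hsplit : Ico b (b + ℓ) = Ico b (b + ℓ / 2) ∪ Ico (b + ℓ / 2) (b + ℓ / 2 + ℓ / 2) := by
    rw [Ico_union_Ico_eq_Ico (by linarith) (by linarith), add_assoc, add_halves]
  rw [hsplit, union_inter_distrib_right, measure_union _ (measurableSet_Ico.inter hs)]
  exact (Ico_disjoint_Ico_same.mono inter_subset_left inter_subset_left)

/-- The hypothesis of the theorem on the subarcs `J` of `I = [b, b + ℓ)`, with `ω(J)^(-β q)`
replaced by the smaller constant `u = ω(I)^(-β q)`. -/
def SubarcAverageLeOne (ν : Measure ℝ) (a : ℝ → ℝ → ℝ) (q : ℝ) (u : ℝ≥0∞) (b ℓ : ℝ) : Prop :=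
  ∀ b' ℓ', 0 < ℓ' → b ≤ b' → b' + ℓ' ≤ b + ℓ →
    ∫⁻ θ in Ico b' (b' + ℓ'), u * dyadicSum a b' ℓ' θ ^ q ∂ν ≤ ν (Ico b' (b' + ℓ'))

section JohnNirenberg

variable {ν : Measure ℝ} {a : ℝ → ℝ → ℝ} {q : ℝ} {u : ℝ≥0∞} {b ℓ : ℝ}

theorem SubarcAverageLeOne.mono (h : SubarcAverageLeOne ν a q u b ℓ) {b' ℓ' : ℝ} (hb : b ≤ b')
    (hb' : b' + ℓ' ≤ b + ℓ) : SubarcAverageLeOne ν a q u b' ℓ' :=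
  fun c m hm hc hcm => h c m hm (hb.trans hc) (hcm.trans hb')

theorem SubarcAverageLeOne.measure_two_lt_le_half (h : SubarcAverageLeOne ν a q u b ℓ)
    (hℓ : 0 < ℓ) :
    ν (Ico b (b + ℓ) ∩ {θ | 2 < u * dyadicSum a b ℓ θ ^ q}) ≤ 2⁻¹ * ν (Ico b (b + ℓ)) :=
  measure_inter_setOf_two_lt_le_half
    ((measurable_dyadicSum.pow_const q).const_mul u).aemeasurable (h b ℓ hℓ le_rfl le_rfl)

theorem mul_dyadicSum_rpow_eq_iSup (hq : 0 < q) (θ : ℝ) :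
    u * dyadicSum a b ℓ θ ^ q = ⨆ k, u * (∑ n ∈ Finset.range k, dyadicLayer a b ℓ n θ) ^ q := by
  rw [dyadicSum, ENNReal.tsum_eq_iSup_nat,
    (ENNReal.monotone_rpow_of_nonneg hq.le).map_iSup_of_continuousAt
      ENNReal.continuous_rpow_const.continuousAt (ENNReal.zero_rpow_of_pos hq),
    ENNReal.mul_iSup]

variable (hq : 0 < q) (hq1 : q ≤ 1)
include hq hq1

/-- Once the ancestors' coefficients `H` together with `a_I` push `u (H + a_I)^q` above `t`, all
of `I` lies in the right-hand set, while by subadditivity of `x ↦ x^q` the left-hand set lies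
in `{2 < u S_I^q}`, whose measure Chebyshev bounds by `ν(I)/2`. -/
theorem SubarcAverageLeOne.measure_superlevel_le_of_lt (h : SubarcAverageLeOne ν a q u b ℓ)
    (hℓ : 0 < ℓ) {H t : ℝ≥0∞} (hHt : u * H ^ q ≤ t)
    (hstop : t < u * (H + ENNReal.ofReal (a b ℓ)) ^ q) (k : ℕ) :
    ν (Ico b (b + ℓ) ∩ {θ | t + 2 < u * (H + ∑ n ∈ Finset.range k, dyadicLayer a b ℓ n θ) ^ q})
      ≤ 2⁻¹ * ν (Ico b (b + ℓ) ∩ {θ | t < u * (H + dyadicSum a b ℓ θ) ^ q}) := by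
  have hsub : Ico b (b + ℓ) ∩
      {θ | t + 2 < u * (H + ∑ n ∈ Finset.range k, dyadicLayer a b ℓ n θ) ^ q} ⊆
      Ico b (b + ℓ) ∩ {θ | 2 < u * dyadicSum a b ℓ θ ^ q} := by
    refine fun θ ⟨hθ, hlt⟩ => ⟨hθ, (ENNReal.add_lt_add_iff_left (ne_top_of_lt hstop)).1 ?_⟩
    calc t + 2 < u * (H + ∑ n ∈ Finset.range k, dyadicLayer a b ℓ n θ) ^ q := hlt
      _ ≤ u * H ^ q + u * (∑ n ∈ Finset.range k, dyadicLayer a b ℓ n θ) ^ q := by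
        rw [← mul_add]; gcongr; exact ENNReal.rpow_add_le_add_rpow _ _ hq.le hq1
      _ ≤ t + u * dyadicSum a b ℓ θ ^ q := by
        gcongr; exact sum_range_dyadicLayer_le_dyadicSum k
  have hI : Ico b (b + ℓ) ⊆ Ico b (b + ℓ) ∩ {θ | t < u * (H + dyadicSum a b ℓ θ) ^ q} :=
    fun θ hθ => ⟨hθ, hstop.trans_le (by gcongr; exact ofReal_le_dyadicSum hθ)⟩
  calc _ ≤ _ := measure_mono hsub
    _ ≤ 2⁻¹ * ν (Ico b (b + ℓ)) := h.measure_two_lt_le_half hℓ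
    _ ≤ _ := by gcongr

/-- Stopping-time argument, by induction on the number `k` of generations summed: `H` collects the
coefficients of the ancestors of `[b, b + ℓ)`, and we stop at the first arc `I` where
`u (H + a_I)^q` exceeds `t`. -/
theorem SubarcAverageLeOne.measure_superlevel_le (k : ℕ) :
    ∀ {b ℓ : ℝ}, SubarcAverageLeOne ν a q u b ℓ → 0 < ℓ → ∀ {H t : ℝ≥0∞}, u * H ^ q ≤ t →
    ν (Ico b (b + ℓ) ∩ {θ | t + 2 < u * (H + ∑ n ∈ Finset.range k, dyadicLayer a b ℓ n θ) ^ q})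
      ≤ 2⁻¹ * ν (Ico b (b + ℓ) ∩ {θ | t < u * (H + dyadicSum a b ℓ θ) ^ q}) := by
  induction k with
  | zero =>
    intro b ℓ _ _ H t hHt
    simp [not_lt.2 (hHt.trans le_self_add)]
  | succ k ih =>
    intro b ℓ h hℓ H t hHt
    set A := ENNReal.ofReal (a b ℓ)
    rcases lt_or_ge t (u * (H + A) ^ q) with hstop | hgo
    · exact h.measure_superlevel_le_of_lt hq hq1 hℓ hHt hstop (k + 1)
    have half : ∀ c, c = b ∨ c = b + ℓ / 2 →
        ν (Ico c (c + ℓ / 2) ∩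
          {θ | t + 2 < u * (H + ∑ n ∈ Finset.range (k + 1), dyadicLayer a b ℓ n θ) ^ q}) ≤
        2⁻¹ * ν (Ico c (c + ℓ / 2) ∩ {θ | t < u * (H + dyadicSum a b ℓ θ) ^ q}) := by
      intro c hc
      have hJ := h.mono (b' := c) (ℓ' := ℓ / 2) (by rcases hc with rfl | rfl <;> linarith)
        (by rcases hc with rfl | rfl <;> linarith)
      refine (congrArg ν ?_).trans_le
        ((ih hJ (by positivity) hgo).trans_eq (congrArg _ (congrArg ν ?_)))
      · refine sep_ext_iff.2 fun θ hθ => ?_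
        rw [mem_ofPred_eq, mem_ofPred_eq, sum_range_succ_dyadicLayer_of_mem_half hℓ.le hc hθ,
          add_assoc]
      · refine (sep_ext_iff.2 fun θ hθ => ?_).symm
        rw [mem_ofPred_eq, mem_ofPred_eq, dyadicSum_eq_of_mem_half hℓ.le hc hθ, add_assoc]
    rw [measure_Ico_inter_eq_add_halves hℓ.le (measurableSet_lt measurable_const (by fun_prop)),
      measure_Ico_inter_eq_add_halves hℓ.le (measurableSet_lt measurable_const (by fun_prop)),
      mul_add]
    exact add_le_add (half b (.inl rfl)) (half _ (.inr rfl))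

theorem SubarcAverageLeOne.measure_add_two_lt_le (h : SubarcAverageLeOne ν a q u b ℓ) (hℓ : 0 < ℓ)
    (t : ℝ≥0∞) :
    ν (Ico b (b + ℓ) ∩ {θ | t + 2 < u * dyadicSum a b ℓ θ ^ q}) ≤
      2⁻¹ * ν (Ico b (b + ℓ) ∩ {θ | t < u * dyadicSum a b ℓ θ ^ q}) := by
  have hunion : Ico b (b + ℓ) ∩ {θ | t + 2 < u * dyadicSum a b ℓ θ ^ q} =
      ⋃ k, Ico b (b + ℓ) ∩
        {θ | t + 2 < u * (0 + ∑ n ∈ Finset.range k, dyadicLayer a b ℓ n θ) ^ q} := by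
    simp only [zero_add, ← inter_iUnion, ← ofPred_exists, ← lt_iSup_iff,
      mul_dyadicSum_rpow_eq_iSup hq]
  have hmono : Monotone fun k => Ico b (b + ℓ) ∩
      {θ | t + 2 < u * (0 + ∑ n ∈ Finset.range k, dyadicLayer a b ℓ n θ) ^ q} :=
    fun i j hij => inter_subset_inter_right _ fun θ hθ => hθ.trans_le <|
      mul_le_mul_right (ENNReal.rpow_le_rpow (add_le_add le_rfl
        (Finset.sum_le_sum_of_subset (Finset.range_subset_range.2 hij))) hq.le) u
  rw [hunion, hmono.measure_iUnion]
  refine iSup_le fun k => ?_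
  simpa only [zero_add] using
    h.measure_superlevel_le hq hq1 k hℓ (by simp [ENNReal.zero_rpow_of_pos hq] : u * 0 ^ q ≤ t)

theorem SubarcAverageLeOne.measure_two_mul_lt_le (h : SubarcAverageLeOne ν a q u b ℓ) (hℓ : 0 < ℓ)
    (n : ℕ) :
    ν (Ico b (b + ℓ) ∩ {θ | 2 * n < u * dyadicSum a b ℓ θ ^ q}) ≤ 2⁻¹ ^ n * ν (Ico b (b + ℓ)) := by
  induction n with
  | zero => simpa using measure_mono inter_subset_left
  | succ n ih =>
    calc _ = ν (Ico b (b + ℓ) ∩ {θ | 2 * n + 2 < u * dyadicSum a b ℓ θ ^ q}) := by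
          push_cast; rw [mul_add_one]
      _ ≤ 2⁻¹ * (2⁻¹ ^ n * ν (Ico b (b + ℓ))) :=
          (h.measure_add_two_lt_le hq hq1 hℓ _).trans (by gcongr)
      _ = _ := by rw [pow_succ', mul_assoc]

end JohnNirenberg

section Weight

variable {ω : ℝ → ℝ} {a : ℝ → ℝ → ℝ} {q β : ℝ}

theorem dyadF_rpow_eq (hq : 0 ≤ q) (b ℓ θ : ℝ) :
    dyadF a ω β b ℓ θ ^ q = wInt ω b ℓ ^ (-(β * q)) * dyadicSum a b ℓ θ ^ q := by
  rw [dyadF_eq_mul_dyadicSum, ENNReal.mul_rpow_of_nonneg _ _ hq, ← ENNReal.rpow_mul, neg_mul]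

theorem withDensity_Ico_eq_wInt (ω : ℝ → ℝ) (b ℓ : ℝ) :
    volume.withDensity (fun θ => ENNReal.ofReal (ω θ)) (Ico b (b + ℓ)) = wInt ω b ℓ := by
  rw [withDensity_apply' _ _, wInt, setLIntegral_congr Ioo_ae_eq_Ico]

theorem subarcAverageLeOne_of_setLIntegral_dyadF_le (hω : Measurable ω) (hq : 0 ≤ q)
    (hβ : 0 ≤ β)
    (hF : ∀ b ℓ : ℝ, 0 < ℓ → ℓ ≤ 2 * π →
      ∫⁻ θ in Set.Ioo b (b + ℓ), dyadF a ω β b ℓ θ ^ q * ENNReal.ofReal (ω θ) ≤ wInt ω b ℓ)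
    {b ℓ : ℝ} (hℓ : ℓ ≤ 2 * π) :
    SubarcAverageLeOne (volume.withDensity fun θ => ENNReal.ofReal (ω θ)) a q
      (wInt ω b ℓ ^ (-(β * q))) b ℓ := by
  intro b' ℓ' hℓ' hb hb'
  have hw : wInt ω b' ℓ' ≤ wInt ω b ℓ := lintegral_mono_set (Ioo_subset_Ioo hb hb')
  rw [withDensity_Ico_eq_wInt, setLIntegral_withDensity_eq_setLIntegral_mul _ hω.ennreal_ofReal
    (by fun_prop) measurableSet_Ico, ← setLIntegral_congr Ioo_ae_eq_Ico]
  refine le_trans (lintegral_mono fun θ => ?_) (hF b' ℓ' hℓ' (by linarith))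
  rw [Pi.mul_apply, mul_comm, dyadF_rpow_eq hq, ENNReal.rpow_neg, ENNReal.rpow_neg]
  gcongr

end Weight

theorem inv_two_pow_floor_half_le (t : ℝ) :
    (2⁻¹ : ℝ≥0∞) ^ ⌊t / 2⌋₊ ≤ ENNReal.ofReal (2 * Real.exp (-(Real.log 2 / 2) * t)) := by
  have hlog : 0 < Real.log 2 := Real.log_pos one_lt_two
  have hfloor := Nat.lt_floor_add_one (t / 2)
  rw [← ENNReal.ofReal_ofNat 2, ← ENNReal.ofReal_inv_of_pos two_pos,
    ← ENNReal.ofReal_pow (by norm_num)]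
  refine ENNReal.ofReal_le_ofReal ?_
  calc (2⁻¹ : ℝ) ^ ⌊t / 2⌋₊ = Real.exp (⌊t / 2⌋₊ * -Real.log 2) := by
        rw [Real.exp_nat_mul, Real.exp_neg, Real.exp_log two_pos]
    _ ≤ Real.exp (Real.log 2 + -(Real.log 2 / 2) * t) := Real.exp_le_exp.2 (by nlinarith)
    _ = _ := by rw [Real.exp_add, Real.exp_log two_pos]

theorem two_mul_floor_half_le_ofReal {t : ℝ} (ht : 0 ≤ t) :
    2 * (⌊t / 2⌋₊ : ℝ≥0∞) ≤ ENNReal.ofReal t := by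
  rw [← ENNReal.ofReal_natCast, ← ENNReal.ofReal_ofNat 2, ← ENNReal.ofReal_mul (by norm_num)]
  exact ENNReal.ofReal_le_ofReal (by linarith [Nat.floor_le (by positivity : 0 ≤ t / 2)])

theorem john_nirenberg_type_estimate_general
    (ω : ℝ → ℝ) (a : ℝ → ℝ → ℝ) (q β : ℝ)
    (hω : IsA1 ω) (hq : 0 < q) (hq1 : q < 1) (hβ : 0 ≤ β)
    (hF : ∀ b ℓ : ℝ, 0 < ℓ → ℓ ≤ 2 * π →
      ∫⁻ θ in Set.Ioo b (b + ℓ), dyadF a ω β b ℓ θ ^ q * ENNReal.ofReal (ω θ) ≤ wInt ω b ℓ) :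
    ∃ C lam : ℝ, 0 < C ∧ 0 < lam ∧ ∀ b ℓ : ℝ, 0 < ℓ → ℓ ≤ 2 * π → ∀ t : ℝ, 0 < t →
      ∫⁻ θ in {θ | θ ∈ Set.Ioo b (b + ℓ) ∧ ENNReal.ofReal t < dyadF a ω β b ℓ θ ^ q},
          ENNReal.ofReal (ω θ) ≤
        ENNReal.ofReal (C * Real.exp (-lam * t)) * wInt ω b ℓ := by
  obtain ⟨-, hωm, -, -⟩ := hω
  refine ⟨2, Real.log 2 / 2, two_pos, by positivity, fun b ℓ hℓ hℓ2 t ht => ?_⟩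
  have hS := subarcAverageLeOne_of_setLIntegral_dyadF_le (a := a) (b := b) hωm hq.le hβ hF hℓ2
  rw [← withDensity_apply' _ _, ← withDensity_Ico_eq_wInt]
  calc _ ≤ volume.withDensity (fun θ => ENNReal.ofReal (ω θ)) (Ico b (b + ℓ) ∩
        {θ | 2 * ⌊t / 2⌋₊ < wInt ω b ℓ ^ (-(β * q)) * dyadicSum a b ℓ θ ^ q}) :=
        measure_mono <| by
          rintro θ ⟨hθ, hlt⟩
          exact ⟨Ioo_subset_Ico_self hθ,
            (two_mul_floor_half_le_ofReal ht.le).trans_lt (dyadF_rpow_eq hq.le b ℓ θ ▸ hlt)⟩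
    _ ≤ _ := hS.measure_two_mul_lt_le hq hq1.le hℓ _
    _ ≤ _ := by gcongr; exact inv_two_pow_floor_half_le t

/-- The John–Nirenberg type estimate (2.20): if `(1/ω(I))∫_I F_I^q ω ≤ 1` for every arc `I`,
then `ω({ξ ∈ I : F_I(ξ)^q > t}) ≤ C e^{-λt} ω(I)` for all arcs `I` and all `t > 0`. -/
theorem john_nirenberg_type_estimate
    (ω : ℝ → ℝ) (a : ℝ → ℝ → ℝ) (q β : ℝ)
    (hω : IsA1 ω) (hq : 0 < q) (hq1 : q < 1) (hβ : 0 ≤ β)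
    (ha : ∀ x y : ℝ, 0 ≤ a x y)
    (hF : ∀ b ℓ : ℝ, 0 < ℓ → ℓ ≤ 2 * π →
      ∫⁻ θ in Set.Ioo b (b + ℓ), dyadF a ω β b ℓ θ ^ q * ENNReal.ofReal (ω θ) ≤ wInt ω b ℓ) :
    ∃ C lam : ℝ, 0 < C ∧ 0 < lam ∧ ∀ b ℓ : ℝ, 0 < ℓ → ℓ ≤ 2 * π → ∀ t : ℝ, 0 < t →
      ∫⁻ θ in {θ | θ ∈ Set.Ioo b (b + ℓ) ∧ ENNReal.ofReal t < dyadF a ω β b ℓ θ ^ q},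
          ENNReal.ofReal (ω θ) ≤
        ENNReal.ofReal (C * Real.exp (-lam * t)) * wInt ω b ℓ :=
  john_nirenberg_type_estimate_general ω a q β hω hq hq1 hβ hF

end
end
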